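/- arXiv:1402.3999 — 2 statements merged into one kernel-verified Lean document; each statement's English description precedes it below -/
import Mathlib

section
/- One has 𝓒 ⊆ 𝓐^uni, and for every A ∈ 𝓒 the value assigned by α agrees with natural density: α(A) = λ(log(A)) = λ(A). -/
/-!
Write `R(t) = ∫₀ᵗ 1_A`, so that `ρ_A(t) = R(t)/t`. The substitution `t = eˢ` turns the mean of
`1_{log A}` over `[x, x + D]` into `(1/D) ∫_{eˣ}^{e^{x+D}} 1_A(t) dt/t`, and integration by parts
(`R` is absolutely continuous with `R' = 1_A` a.e.) gives
`∫ᵤᵛ 1_A(t) dt/t = ρ_A(v) - ρ_A(u) + ∫ᵤᵛ ρ_A(t) dt/t`. Hence that mean differs from `λ(A)` by at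
most `(2 + ∫ₓ^{x+D} |ρ_A(eˢ) - λ(A)| ds)/D`, which tends to `0` uniformly in `x ≥ 0` because
`ρ_A(eˢ) → λ(A)` and `|ρ_A| ≤ 1`. So the supremum and the infimum over `x` of `σ_{log A}(D, x)`
both tend to `λ(A)`, and so does `ρ_{log A}(D) = σ_{log A}(D, 0)`.
-/

open MeasureTheory Filter Set Topology

noncomputable section

namespace UPN

/-- The half line `[0,∞)` viewed as a subset of `ℝ`. -/
def Ray : Set ℝ := Set.Ici 0

/-- The indicator function `1_A`. -/
def ind (A : Set ℝ) : ℝ → ℝ := Set.indicator A fun _ => (1 : ℝ)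

/-- The collection `𝓜` of countable unions `⋃ᵢ [a_{2i-1}, a_{2i})` for a
nondecreasing nonnegative sequence `a`. -/
def Mcal : Set (Set ℝ) :=
  {A | ∃ a : ℕ → ℝ, 0 ≤ a 0 ∧ Monotone a ∧
        A = ⋃ i : ℕ, Set.Ico (a (2 * i)) (a (2 * i + 1))}

/-- The density function `ρ_A`: `ρ_A(0) = 0` and `ρ_A(x) = (1/x)∫₀ˣ 1_A(y) dy`. -/
def rho (A : Set ℝ) (x : ℝ) : ℝ :=
  if x = 0 then 0 else (1 / x) * ∫ y in (0:ℝ)..x, ind A y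

/-- The collection `𝓒` of elements of `𝓜` having natural density. -/
def Ccal : Set (Set ℝ) :=
  {A | A ∈ Mcal ∧ ∃ l : ℝ, Tendsto (rho A) atTop (𝓝 l)}

/-- The natural density `λ(A) = lim_{x→∞} ρ_A(x)`. -/
def lam (A : Set ℝ) : ℝ := limUnder atTop (rho A)

/-- `S_A(x) = m(A ∩ [0,x))`. -/
def Sfn (A : Set ℝ) (x : ℝ) : ℝ := (volume (A ∩ Set.Ico 0 x)).toReal

/-- The thinning operation `A ∘ B = {x : x ∈ A ∧ S_A(x) ∈ B}`. -/
def thin (A B : Set ℝ) : Set ℝ := {x | x ∈ A ∧ Sfn A x ∈ B}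

/-- An f-system on `[0,∞)`: a nonempty collection of subsets of `[0,∞)` closed
under complements (in `[0,∞)`) and finite disjoint unions. -/
structure IsFSystem (F : Set (Set ℝ)) : Prop where
  nonempty : F.Nonempty
  subset_ray : ∀ A ∈ F, A ⊆ Ray
  compl_mem : ∀ A ∈ F, Ray \ A ∈ F
  union_mem : ∀ A ∈ F, ∀ B ∈ F, A ∩ B = ∅ → A ∪ B ∈ F

/-- A probability pair `(F, μ)` on `[0,∞)`: `F` is an f-system and `μ` is a finitely
additive probability measure on `F` with values in `[0,1]` and `μ([0,∞)) = 1`. -/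
structure IsProbPair (F : Set (Set ℝ)) (μ : Set ℝ → ℝ) : Prop where
  fsystem : IsFSystem F
  nonneg : ∀ A ∈ F, 0 ≤ μ A
  le_one : ∀ A ∈ F, μ A ≤ 1
  ray_eq_one : μ Ray = 1
  additive : ∀ A ∈ F, ∀ B ∈ F, A ∩ B = ∅ → μ (A ∪ B) = μ A + μ B

/-- A weakly thinnable pair (WTP). -/
structure IsWTP (F : Set (Set ℝ)) (μ : Set ℝ → ℝ) : Prop where
  pair : IsProbPair F μ
  Ccal_subset : Ccal ⊆ F
  subset_Mcal : F ⊆ Mcal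
  P1 : ∀ C ∈ Ccal, ∀ A ∈ F, thin C A ∈ F ∧ μ (thin C A) = μ C * μ A
  P2 : ∀ A ∈ F, ∀ B ∈ F, (∀ x : ℝ, Sfn B x ≤ Sfn A x) → μ B ≤ μ A
  P3 : ∀ c : ℝ, 0 ≤ c → μ (Set.Ici c) = 1

/-- Coherence of a probability measure `μ` on an f-system `F` on `[0,∞)`. -/
def Coherent (F : Set (Set ℝ)) (μ : Set ℝ → ℝ) : Prop :=
  ∀ (n : ℕ) (a : Fin n → ℝ) (A : Fin n → Set ℝ), (∀ i, A i ∈ F) →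
    0 ≤ ⨆ x : Ray, ∑ i, a i * (ind (A i) ↑x - μ (A i))

/-- `σ_A(D,x) = (1/D) ∫_x^{x+D} 1_A(y) dy`. -/
def sigmaFn (A : Set ℝ) (D x : ℝ) : ℝ := (1 / D) * ∫ y in x..(x + D), ind A y

/-- `U(A) = limsup_{D→∞} sup_{x>0} σ_A(D,x)`. -/
def Ufn (A : Set ℝ) : ℝ :=
  limsup (fun D => ⨆ x : Set.Ioi (0:ℝ), sigmaFn A D ↑x) atTop

/-- `L(A) = liminf_{D→∞} inf_{x>0} σ_A(D,x)`. -/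
def Lfn (A : Set ℝ) : ℝ :=
  liminf (fun D => ⨅ x : Set.Ioi (0:ℝ), sigmaFn A D ↑x) atTop

/-- `𝓦^uni = {A ∈ 𝓜 : L(A) = U(A)}`. -/
def Wuni : Set (Set ℝ) := {A | A ∈ Mcal ∧ Lfn A = Ufn A}

/-- `log(A) = {log a : a ∈ A ∩ [1,∞)}`. -/
def logSet (A : Set ℝ) : Set ℝ := Real.log '' (A ∩ Set.Ici 1)

/-- `𝓐^uni = {A ∈ 𝓜 : log(A) ∈ 𝓦^uni}`. -/
def Auni : Set (Set ℝ) := {A | A ∈ Mcal ∧ logSet A ∈ Wuni}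

/-- `α(A) = λ(log(A))`. -/
def alphaFn (A : Set ℝ) : ℝ := lam (logSet A)

/-- `ξ_A(D,x) = (1/log D) ∫_x^{Dx} ρ_A(y)/y dy`. -/
def xi (A : Set ℝ) (D x : ℝ) : ℝ :=
  (1 / Real.log D) * ∫ y in x..(D * x), rho A y / y

/-- Membership in `𝓟`: `s` is a sequence in `(1,∞)` tending to `∞` and `f` is a
sequence in `(1,∞)`. -/
def memP (s f : ℕ → ℝ) : Prop :=
  (∀ n, 1 < s n) ∧ Tendsto s atTop atTop ∧ ∀ n, 1 < f n

/-- `𝓐^{s,f} = {A ∈ 𝓜 : lim_n ξ_A(s_n,f_n) exists}`. -/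
def Asf (s f : ℕ → ℝ) : Set (Set ℝ) :=
  {A | A ∈ Mcal ∧ ∃ l : ℝ, Tendsto (fun n => xi A (s n) (f n)) atTop (𝓝 l)}

/-- `α^{s,f}(A) = lim_n ξ_A(s_n,f_n)`. -/
def alphasf (s f : ℕ → ℝ) (A : Set ℝ) : ℝ :=
  limUnder atTop fun n => xi A (s n) (f n)

/-- `τ_A(C,j)`; here `j : ℕ` starting from `0` corresponds to the interval
`[C^j, C^{j+1})`, i.e. to the paper's `τ_A(C, j+1)`. -/
def tau (A : Set ℝ) (C : ℝ) (j : ℕ) : ℝ :=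
  (1 / (C ^ j * (C - 1))) * ∫ y in (C ^ j : ℝ)..(C ^ (j + 1)), ind A y

/-- `U^*(C,A) = limsup_{n→∞} sup_k (1/n) Σ_{j=k}^{k+n-1} τ_A(C,j)`. -/
def Ustar (C : ℝ) (A : Set ℝ) : ℝ :=
  limsup (fun n : ℕ => ⨆ k : ℕ, (1 / (n : ℝ)) * ∑ i ∈ Finset.range n, tau A C (k + i)) atTop

theorem integral_comp_exp (g : ℝ → ℝ) (a b : ℝ) :
    ∫ s in a..b, g (Real.exp s) = ∫ t in Real.exp a..Real.exp b, g t / t := by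
  have := intervalIntegral.integral_comp_mul_deriv_of_deriv_nonneg (a := a) (b := b)
    (g := fun t => g t / t) Real.continuous_exp.continuousOn
    (fun x _ => Real.hasDerivAt_exp x) (fun x _ => (Real.exp_pos x).le)
  simpa [div_mul_cancel₀ _ (Real.exp_pos _).ne'] using this

theorem integral_div_eq_primitive {f : ℝ → ℝ} {u v : ℝ} (hf : IntervalIntegrable f volume 0 v)
    (hu : 0 < u) (huv : u ≤ v) :
    ∫ t in u..v, f t / t = (∫ s in 0..v, f s) / v - (∫ s in 0..u, f s) / u +
      ∫ t in u..v, (∫ s in 0..t, f s) / t ^ 2 := by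
  have hsub : uIcc u v ⊆ uIcc 0 v := by
    rw [uIcc_of_le huv, uIcc_of_le (hu.le.trans huv)]
    exact Icc_subset_Icc_left hu.le
  have hF : AbsolutelyContinuousOnInterval (fun x => ∫ s in 0..x, f s) u v :=
    (hf.absolutelyContinuousOnInterval_intervalIntegral left_mem_uIcc).mono hsub
  have hinv : AbsolutelyContinuousOnInterval (fun x : ℝ => x⁻¹) u v := by
    refine ContDiffOn.absolutelyContinuousOnInterval (contDiffOn_inv ℝ |>.mono ?_)
    intro t ht
    rw [uIcc_of_le huv] at ht
    exact (hu.trans_le ht.1).ne'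
  have hparts := hF.integral_mul_deriv_eq_deriv_mul hinv
  have hderiv : ∫ t in u..v, deriv (fun x => ∫ s in 0..x, f s) t * t⁻¹ =
      ∫ t in u..v, f t / t := by
    refine intervalIntegral.integral_congr_ae ?_
    filter_upwards [hf.ae_hasDerivAt_integral] with t ht htuv
    rw [(ht (hsub (uIoc_subset_uIcc htuv)) 0 left_mem_uIcc).deriv, div_eq_mul_inv]
  simp only [deriv_inv, hderiv, mul_neg, intervalIntegral.integral_neg] at hparts
  simp only [div_eq_mul_inv] at hparts ⊢
  linarith

section Density

variable {A : Set ℝ}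

theorem intervalIntegrable_ind (hA : MeasurableSet A) (a b : ℝ) :
    IntervalIntegrable (ind A) volume a b :=
  have h1 : IntervalIntegrable (fun _ => (1 : ℝ)) volume a b := intervalIntegrable_const
  ⟨h1.1.indicator hA, h1.2.indicator hA⟩

theorem abs_rho_le_one (A : Set ℝ) (x : ℝ) : |rho A x| ≤ 1 := by
  rw [rho]
  split_ifs with hx
  · simp
  have hbound : ‖∫ y in (0:ℝ)..x, ind A y‖ ≤ 1 * |x - 0| := by
    refine intervalIntegral.norm_integral_le_of_norm_le_const fun y _ => ?_
    unfold ind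
    by_cases hy : y ∈ A <;> simp [hy]
  rw [Real.norm_eq_abs, sub_zero, one_mul] at hbound
  rw [abs_mul, one_div, abs_inv]
  exact inv_mul_le_one_of_le₀ hbound (abs_nonneg x)

theorem rho_eq_div {x : ℝ} (hx : x ≠ 0) : rho A x = (∫ y in (0:ℝ)..x, ind A y) / x := by
  rw [rho, if_neg hx, one_div_mul_eq_div]

theorem continuousOn_rho (hA : MeasurableSet A) : ContinuousOn (rho A) (Ioi 0) := by
  refine ContinuousOn.congr ?_ fun x (hx : 0 < x) => rho_eq_div hx.ne'
  exact (intervalIntegral.continuous_primitive (intervalIntegrable_ind hA) 0).continuousOn.div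
    continuousOn_id fun x (hx : 0 < x) => hx.ne'

theorem integral_ind_div_eq (hA : MeasurableSet A) {u v : ℝ} (hu : 0 < u) (huv : u ≤ v) :
    ∫ t in u..v, ind A t / t = rho A v - rho A u + ∫ t in u..v, rho A t / t := by
  rw [integral_div_eq_primitive (intervalIntegrable_ind hA 0 v) hu huv,
    rho_eq_div (hu.trans_le huv).ne', rho_eq_div hu.ne']
  congr 1
  refine intervalIntegral.integral_congr fun t ht => ?_
  rw [uIcc_of_le huv] at ht
  rw [rho_eq_div (hu.trans_le ht.1).ne', div_div, sq]

theorem abs_integral_ind_div_sub_le (hA : MeasurableSet A) {u v : ℝ} (hu : 0 < u)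
    (huv : u ≤ v) (l : ℝ) :
    |(∫ t in u..v, ind A t / t) - l * Real.log (v / u)| ≤
      2 + ∫ t in u..v, |rho A t - l| / t := by
  have hpos : ∀ t ∈ uIcc u v, 0 < t := fun t ht => by
    rw [uIcc_of_le huv] at ht
    exact hu.trans_le ht.1
  have hcont : ContinuousOn (fun t => rho A t / t) (uIcc u v) :=
    ((continuousOn_rho hA).mono fun t ht => hpos t ht).div continuousOn_id
      fun t ht => (hpos t ht).ne'
  have hinv : IntervalIntegrable (fun t : ℝ => t⁻¹) volume u v :=
    (continuousOn_inv₀.mono fun t ht => (hpos t ht).ne').intervalIntegrable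
  have hsplit : (∫ t in u..v, ind A t / t) - l * Real.log (v / u) =
      rho A v - rho A u + ∫ t in u..v, (rho A t - l) / t := by
    rw [integral_ind_div_eq hA hu huv, ← integral_inv_of_pos hu (hu.trans_le huv),
      ← intervalIntegral.integral_const_mul, add_sub_assoc,
      ← intervalIntegral.integral_sub hcont.intervalIntegrable (hinv.const_mul l)]
    simp only [div_eq_mul_inv, sub_mul]
  have hrho : |rho A v - rho A u| ≤ 2 := by
    have := abs_rho_le_one A v
    have := abs_rho_le_one A u
    rw [abs_le] at *
    constructor <;> linarith
  have hint : |∫ t in u..v, (rho A t - l) / t| ≤ ∫ t in u..v, |rho A t - l| / t := by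
    refine (intervalIntegral.abs_integral_le_integral_abs huv).trans_eq ?_
    refine intervalIntegral.integral_congr fun t ht => ?_
    rw [abs_div, abs_of_pos (hpos t ht)]
  rw [hsplit]
  exact (abs_add_le _ _).trans (add_le_add hrho hint)

end Density

theorem eventually_add_integral_le_mul {h : ℝ → ℝ} {M : ℝ} (hc : Continuous h)
    (hM : ∀ s, |h s| ≤ M) (h0 : Tendsto h atTop (𝓝 0)) (C : ℝ) {ε : ℝ} (hε : 0 < ε) :
    ∀ᶠ D in atTop, ∀ x, 0 ≤ x → C + ∫ s in x..x + D, h s ≤ ε * D := by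
  have integral_le {a b K : ℝ} (hK : ∀ s ∈ uIoc a b, ‖h s‖ ≤ K) :
      ∫ s in a..b, h s ≤ K * |b - a| :=
    (le_abs_self _).trans (intervalIntegral.norm_integral_le_of_norm_le_const hK)
  obtain ⟨T, hT⟩ := eventually_atTop.1 <| h0.eventually <|
    Metric.closedBall_mem_nhds (0 : ℝ) (half_pos hε)
  set T' := max T 0
  filter_upwards [eventually_ge_atTop ((C + M * T') / (ε / 2)), eventually_ge_atTop 0]
    with D hD hD0 x hx
  have hM0 : 0 ≤ M := (abs_nonneg _).trans (hM 0)
  -- Below `T'` the integrand is bounded by `M` on an interval of length at most `T'`,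
  -- beyond it by `ε / 2`.
  set w := max x (min T' (x + D))
  have hxw : x ≤ w := le_max_left _ _
  have hwD : w ≤ x + D := max_le (by linarith) (min_le_right _ _)
  have hhead : ∫ s in x..w, h s ≤ M * T' := by
    refine (integral_le fun s _ => hM s).trans (mul_le_mul_of_nonneg_left ?_ hM0)
    rw [abs_of_nonneg (sub_nonneg.2 hxw), sub_le_iff_le_add]
    exact max_le (by linarith [le_max_right T 0]) ((min_le_left _ _).trans (by linarith))
  have htail : ∫ s in w..x + D, h s ≤ ε / 2 * D := by
    refine (integral_le fun s hs => ?_).trans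
      (mul_le_mul_of_nonneg_left ?_ (half_pos hε).le)
    · rw [uIoc_of_le hwD] at hs
      have hTs : T' < s := by
        rcases min_lt_iff.1 ((le_max_right _ _).trans_lt hs.1) with hT's | hDs
        · exact hT's
        · exact absurd hs.2 hDs.not_ge
      simpa using hT s ((le_max_left T 0).trans hTs.le)
    · rw [abs_of_nonneg (sub_nonneg.2 hwD)]
      linarith
  rw [← intervalIntegral.integral_add_adjacent_intervals (hc.intervalIntegrable x w)
    (hc.intervalIntegrable w (x + D))]
  rw [div_le_iff₀ (half_pos hε)] at hD
  linarith

section LogSet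

variable {A : Set ℝ}

theorem ind_logSet {y : ℝ} (hy : 0 ≤ y) : ind (logSet A) y = ind A (Real.exp y) := by
  have hmem : y ∈ logSet A ↔ Real.exp y ∈ A := by
    constructor
    · rintro ⟨t, ⟨htA, ht1⟩, rfl⟩
      rwa [Real.exp_log (one_pos.trans_le ht1)]
    · exact fun h => ⟨Real.exp y, ⟨h, Real.one_le_exp hy⟩, Real.log_exp y⟩
  by_cases h : Real.exp y ∈ A <;> simp [ind, h, hmem]

theorem abs_sigmaFn_logSet_sub_le (hA : MeasurableSet A) {D x : ℝ} (hx : 0 ≤ x) (hD : 0 < D)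
    (l : ℝ) :
    |sigmaFn (logSet A) D x - l| ≤ (2 + ∫ s in x..x + D, |rho A (Real.exp s) - l|) / D := by
  have hind : ∫ y in x..x + D, ind (logSet A) y =
      ∫ t in Real.exp x..Real.exp (x + D), ind A t / t := by
    rw [← integral_comp_exp]
    refine intervalIntegral.integral_congr fun y hy => ind_logSet ?_
    rw [uIcc_of_le (by linarith)] at hy
    exact hx.trans hy.1
  have hlog : Real.log (Real.exp (x + D) / Real.exp x) = D := by
    rw [← Real.exp_sub, Real.log_exp, add_sub_cancel_left]
  have hbound := abs_integral_ind_div_sub_le hA (Real.exp_pos x)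
    (Real.exp_le_exp.2 (le_add_of_nonneg_right hD.le)) l
  rw [hlog, ← integral_comp_exp (fun t => |rho A t - l|)] at hbound
  rw [le_div_iff₀ hD, sigmaFn, hind]
  calc |1 / D * (∫ t in Real.exp x..Real.exp (x + D), ind A t / t) - l| * D
      = |(∫ t in Real.exp x..Real.exp (x + D), ind A t / t) - l * D| := by
        rw [← abs_of_pos hD, ← abs_mul, abs_of_pos hD]
        congr 1
        field_simp
    _ ≤ _ := hbound

theorem eventually_abs_sigmaFn_logSet_sub_le (hA : MeasurableSet A) {l : ℝ}
    (hl : Tendsto (rho A) atTop (𝓝 l)) {ε : ℝ} (hε : 0 < ε) :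
    ∀ᶠ D in atTop, ∀ x, 0 ≤ x → |sigmaFn (logSet A) D x - l| ≤ ε := by
  have hc : Continuous fun s => |rho A (Real.exp s) - l| :=
    (((continuousOn_rho hA).comp_continuous Real.continuous_exp Real.exp_pos).sub
      continuous_const).abs
  have hM : ∀ s, |(fun s => |rho A (Real.exp s) - l|) s| ≤ 1 + |l| := fun s => by
    rw [abs_abs]
    exact (abs_sub _ _).trans (by gcongr; exact abs_rho_le_one A _)
  have h0 : Tendsto (fun s => |rho A (Real.exp s) - l|) atTop (𝓝 0) := by
    simpa using ((hl.comp Real.tendsto_exp_atTop).sub_const l).abs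
  filter_upwards [eventually_add_integral_le_mul hc hM h0 2 hε, eventually_gt_atTop 0]
    with D hD hD0 x hx
  exact (abs_sigmaFn_logSet_sub_le hA hx hD0 l).trans ((div_le_iff₀ hD0).2 (hD x hx))

end LogSet

section UniformLimit

variable {α ι : Type*} [Nonempty ι]

theorem abs_ciSup_sub_le {f : ι → ℝ} {l ε : ℝ} (h : ∀ i, |f i - l| ≤ ε) :
    |(⨆ i, f i) - l| ≤ ε := by
  simp only [abs_le] at h ⊢
  have hbdd : BddAbove (range f) := ⟨l + ε, forall_mem_range.2 fun i => by linarith [h i]⟩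
  have i := Classical.arbitrary ι
  constructor
  · linarith [le_ciSup hbdd i, h i]
  · linarith [ciSup_le fun i => (by linarith [h i] : f i ≤ l + ε)]

theorem abs_ciInf_sub_le {f : ι → ℝ} {l ε : ℝ} (h : ∀ i, |f i - l| ≤ ε) :
    |(⨅ i, f i) - l| ≤ ε := by
  simp only [abs_le] at h ⊢
  have hbdd : BddBelow (range f) := ⟨l - ε, forall_mem_range.2 fun i => by linarith [h i]⟩
  have i := Classical.arbitrary ι
  constructor
  · linarith [le_ciInf fun i => (by linarith [h i] : l - ε ≤ f i)]
  · linarith [ciInf_le hbdd i, h i]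

variable {p : Filter α} {F : α → ι → ℝ} {l : ℝ}

theorem tendsto_ciSup_of_uniform (h : ∀ ε > 0, ∀ᶠ a in p, ∀ i, |F a i - l| ≤ ε) :
    Tendsto (fun a => ⨆ i, F a i) p (𝓝 l) :=
  Metric.tendsto_nhds.2 fun ε hε => (h (ε / 2) (half_pos hε)).mono fun _ ha =>
    (abs_ciSup_sub_le ha).trans_lt (half_lt_self hε)

theorem tendsto_ciInf_of_uniform (h : ∀ ε > 0, ∀ᶠ a in p, ∀ i, |F a i - l| ≤ ε) :
    Tendsto (fun a => ⨅ i, F a i) p (𝓝 l) :=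
  Metric.tendsto_nhds.2 fun ε hε => (h (ε / 2) (half_pos hε)).mono fun _ ha =>
    (abs_ciInf_sub_le ha).trans_lt (half_lt_self hε)

end UniformLimit

section LogDensity

variable {A : Set ℝ} {l : ℝ}

theorem measurableSet_of_mem_Mcal (hA : A ∈ Mcal) : MeasurableSet A := by
  obtain ⟨a, -, -, rfl⟩ := hA
  exact MeasurableSet.iUnion fun i => measurableSet_Ico

theorem log_image_Ico_inter_Ici_one (c d : ℝ) :
    Real.log '' (Ico c d ∩ Ici 1) = Ico (Real.log (max c 1)) (Real.log (max d 1)) := by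
  ext y
  constructor
  · rintro ⟨t, ⟨⟨hct, htd⟩, ht1⟩, rfl⟩
    exact ⟨Real.log_le_log (by positivity) (max_le hct ht1),
      Real.log_lt_log (one_pos.trans_le ht1) (htd.trans_le (le_max_left d 1))⟩
  · rintro ⟨hcy, hyd⟩
    have hy0 : 0 ≤ y := (Real.log_nonneg (le_max_right c 1)).trans hcy
    have hd1 : 1 < d := by
      by_contra! hd
      have : max d 1 ≤ max c 1 := by rw [max_eq_right hd]; exact le_max_right c 1
      exact (hcy.trans_lt hyd).not_ge (Real.log_le_log (by positivity) this)
    refine ⟨Real.exp y, ⟨⟨?_, ?_⟩, Real.one_le_exp hy0⟩, Real.log_exp y⟩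
    · calc c ≤ max c 1 := le_max_left c 1
        _ = Real.exp (Real.log (max c 1)) := (Real.exp_log (by positivity)).symm
        _ ≤ Real.exp y := Real.exp_le_exp.2 hcy
    · calc Real.exp y < Real.exp (Real.log (max d 1)) := Real.exp_lt_exp.2 hyd
        _ = d := by rw [Real.exp_log (by positivity), max_eq_left hd1.le]

theorem logSet_mem_Mcal (hA : A ∈ Mcal) : logSet A ∈ Mcal := by
  obtain ⟨a, -, hmono, rfl⟩ := hA
  refine ⟨fun n => Real.log (max (a n) 1), Real.log_nonneg (le_max_right _ 1),
    fun m n h => Real.log_le_log (by positivity) (max_le_max (hmono h) le_rfl), ?_⟩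
  rw [logSet, iUnion_inter, image_iUnion]
  exact iUnion_congr fun i => log_image_Ico_inter_Ici_one _ _

theorem rho_eq_sigmaFn_zero (B : Set ℝ) : rho B = fun x => sigmaFn B x 0 := by
  ext x
  rw [rho, sigmaFn, zero_add]
  split_ifs with hx
  · simp [hx]
  · rfl

theorem tendsto_rho_logSet (hA : MeasurableSet A) (hl : Tendsto (rho A) atTop (𝓝 l)) :
    Tendsto (rho (logSet A)) atTop (𝓝 l) := by
  rw [rho_eq_sigmaFn_zero]
  exact Metric.tendsto_nhds.2 fun ε hε =>
    (eventually_abs_sigmaFn_logSet_sub_le hA hl (half_pos hε)).mono fun _ hD =>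
      (hD 0 le_rfl).trans_lt (half_lt_self hε)

theorem Ufn_logSet (hA : MeasurableSet A) (hl : Tendsto (rho A) atTop (𝓝 l)) :
    Ufn (logSet A) = l :=
  (tendsto_ciSup_of_uniform fun _ hε => (eventually_abs_sigmaFn_logSet_sub_le hA hl hε).mono
    fun _ hD (x : Ioi (0 : ℝ)) => hD x (le_of_lt x.2)).limsup_eq

theorem Lfn_logSet (hA : MeasurableSet A) (hl : Tendsto (rho A) atTop (𝓝 l)) :
    Lfn (logSet A) = l :=
  (tendsto_ciInf_of_uniform fun _ hε => (eventually_abs_sigmaFn_logSet_sub_le hA hl hε).mono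
    fun _ hD (x : Ioi (0 : ℝ)) => hD x (le_of_lt x.2)).liminf_eq

theorem logSet_mem_Wuni (hA : A ∈ Mcal) (hl : Tendsto (rho A) atTop (𝓝 l)) :
    logSet A ∈ Wuni := by
  have hAm := measurableSet_of_mem_Mcal hA
  exact ⟨logSet_mem_Mcal hA, by rw [Lfn_logSet hAm hl, Ufn_logSet hAm hl]⟩

end LogDensity

/-- `𝓒 ⊆ 𝓐^uni`, and for `A ∈ 𝓒` with natural density `λ(A) = l`, the natural
density of `log(A)` exists and `α(A) = λ(log(A)) = λ(A) = l`. -/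
theorem stmt2 :
    Ccal ⊆ Auni ∧
    ∀ A ∈ Ccal, ∀ l : ℝ, Tendsto (rho A) atTop (𝓝 l) →
      Tendsto (rho (logSet A)) atTop (𝓝 l) ∧ alphaFn A = l := by
  refine ⟨fun A ⟨hA, _, hl⟩ => ⟨hA, logSet_mem_Wuni hA hl⟩, fun A ⟨hA, _⟩ l hl => ?_⟩
  have hlog := tendsto_rho_logSet (measurableSet_of_mem_Mcal hA) hl
  exact ⟨hlog, hlog.limUnder_eq⟩

end UPN
end
end

section
/- Let (X, d) be a metric space carrying a uniform measure ν with ν(X) = ∞, let h(r) = ν(B(x,r)) (independent of x) and assume that for every C > 0, lim_{r→∞} h(r+C)/h(r) = 1. Let ν̄ be the completion of ν and A a set measurable for ν̄. For u ≥ 0 set r⁻(u) = sup{r ∈ [0,∞) : h(r) ≤ u} and r⁺(u) = r⁻(u) + 1. Then for all fixed x, y ∈ X, the difference ν̄(B(x, r⁻(u)) ∩ A)/h(r⁻(u)) − ν̄(B(y, r⁺(u)) ∩ A)/h(r⁺(u)) tends to 0 as u → ∞. -/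
/-! Write `a = ν(B(x,r) ∩ A)` and `b = ν(B(y,r+1) ∩ A)`, and put `C = 1 + d(x,y)`. The balls
`B(x,r)` and `B(y,r+1)` both lie in a ball of radius `r + C` centred at either point, so by
subadditivity of the outer measure each of `a` and `b` exceeds the other by at most the measure
of an annulus, `h(r+C) - h(r)`. Hence the two ratios differ by at most `2 (h(r+C)/h(r) - 1)`,
and this tends to `0` along `r = r⁻(u)`, because `ν(X) = ∞` forces `h → ∞` and so `r⁻(u) → ∞`. -/

open MeasureTheory Filter Set Topology

noncomputable section

namespace UPN

/-- A Borel measure `ν` on a metric space is uniform if all open balls of equal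
(positive) radius have equal measure, which is positive and finite. -/
def IsUniformMeasure {X : Type*} [MetricSpace X] [MeasurableSpace X]
    (ν : Measure X) : Prop :=
  ∀ r : ℝ, 0 < r → ∀ x y : X,
    0 < ν (Metric.ball x r) ∧ ν (Metric.ball x r) = ν (Metric.ball y r) ∧
      ν (Metric.ball x r) < ⊤

/-- `r⁻(u) = sup {r ≥ 0 : h(r) ≤ u}`. -/
def rminus (h : ℝ → ℝ) (u : ℝ) : ℝ := sSup {r : ℝ | 0 ≤ r ∧ h r ≤ u}

open Metric

lemma abs_div_sub_div_le {a b p q m : ℝ} (hp : 0 < p) (hpq : p ≤ q) (hqm : q ≤ m)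
    (hb : 0 ≤ b) (hbq : b ≤ q) (hab : |a - b| ≤ m - p) :
    |a / p - b / q| ≤ 2 * (m / p - 1) := by
  have hq : 0 < q := hp.trans_le hpq
  have h₁ : |(a - b) / p| ≤ (m - p) / p := by
    rw [abs_div, abs_of_pos hp]
    gcongr
  have h₂ : |b * (q - p) / (p * q)| ≤ (m - p) / p := by
    rw [abs_of_nonneg (by have := sub_nonneg.2 hpq; positivity), div_le_div_iff₀ (by positivity) hp]
    nlinarith [mul_le_mul hbq (sub_le_sub_right hqm p) (sub_nonneg.2 hpq) hq.le]
  calc |a / p - b / q| = |(a - b) / p + b * (q - p) / (p * q)| := by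
        congr 1; field_simp; ring
    _ ≤ |(a - b) / p| + |b * (q - p) / (p * q)| := abs_add_le _ _
    _ ≤ (m - p) / p + (m - p) / p := add_le_add h₁ h₂
    _ = 2 * (m / p - 1) := by field_simp; ring

lemma measureReal_inter_le_add_sub {α : Type*} [MeasurableSpace α] {μ : Measure α}
    {s t S : Set α} (A : Set α) (hs : MeasurableSet s) (hst : s ⊆ t) (hSt : S ⊆ t)
    (ht : μ t ≠ ⊤) : μ.real (S ∩ A) ≤ μ.real (s ∩ A) + (μ.real t - μ.real s) := by
  have hcover : S ∩ A ⊆ s ∩ A ∪ t \ s := fun p hp => by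
    by_cases hps : p ∈ s
    exacts [Or.inl ⟨hps, hp.2⟩, Or.inr ⟨hSt hp.1, hps⟩]
  calc μ.real (S ∩ A) ≤ μ.real (s ∩ A ∪ t \ s) :=
        measureReal_mono hcover (measure_ne_top_of_subset (union_subset
          (inter_subset_left.trans hst) sdiff_subset) ht)
    _ ≤ μ.real (s ∩ A) + μ.real (t \ s) := measureReal_union_le _ _
    _ = μ.real (s ∩ A) + (μ.real t - μ.real s) := by
        rw [measureReal_sdiff hst hs ht]

lemma le_rminus {h : ℝ → ℝ} (hh : Tendsto h atTop atTop) {r u : ℝ} (hr : 0 ≤ r)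
    (hru : h r ≤ u) : r ≤ rminus h u := by
  obtain ⟨R, hR⟩ := eventually_atTop.1 (hh.eventually_gt_atTop u)
  refine le_csSup ⟨R, fun s hs => ?_⟩ ⟨hr, hru⟩
  by_contra! hRs
  exact (hR s hRs.le).not_ge hs.2

lemma tendsto_rminus_atTop {h : ℝ → ℝ} (hh : Tendsto h atTop atTop) :
    Tendsto (rminus h) atTop atTop :=
  tendsto_atTop_atTop.2 fun b => ⟨h (max b 0), fun _ hu =>
    (le_max_left b 0).trans (le_rminus hh (le_max_right b 0) hu)⟩

namespace IsUniformMeasure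

variable {X : Type*} [MetricSpace X] [MeasurableSpace X] {ν : Measure X}

lemma measure_ball_ne_top (hν : IsUniformMeasure ν) (x : X) (r : ℝ) :
    ν (ball x r) ≠ ⊤ := by
  rcases le_or_gt r 0 with hr | hr
  · simp [ball_eq_empty.mpr hr]
  · exact (hν r hr x x).2.2.ne

lemma measureReal_ball_pos (hν : IsUniformMeasure ν) (x : X) {r : ℝ} (hr : 0 < r) :
    0 < ν.real (ball x r) :=
  ENNReal.toReal_pos (hν r hr x x).1.ne' (hν.measure_ball_ne_top x r)

lemma monotone_measureReal_ball (hν : IsUniformMeasure ν) (x : X) :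
    Monotone fun r => ν.real (ball x r) :=
  fun _ _ hrs => measureReal_mono (ball_subset_ball hrs) (hν.measure_ball_ne_top x _)

lemma tendsto_measureReal_ball_atTop (hν : IsUniformMeasure ν) (hinf : ν univ = ⊤) (x : X) :
    Tendsto (fun r => ν.real (ball x r)) atTop atTop := by
  have hunion : ⋃ r : ℝ, ball x r = univ :=
    eq_univ_of_forall fun p => mem_iUnion.2 ⟨dist p x + 1, by simp⟩
  have htop : Tendsto (fun r => ν (ball x r)) atTop (𝓝 ⊤) := by
    simpa [Function.comp_def, hunion, hinf] using
      tendsto_measure_iUnion_atTop (μ := ν) fun _ _ hrs => ball_subset_ball (x := x) hrs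
  refine tendsto_atTop.2 fun b =>
    (htop.eventually (lt_mem_nhds (ENNReal.ofReal_lt_top (r := b)))).mono fun r hr => ?_
  exact (ENNReal.ofReal_le_iff_le_toReal (hν.measure_ball_ne_top x r)).1 hr.le

lemma abs_ratio_sub_ratio_le [OpensMeasurableSpace X] (hν : IsUniformMeasure ν) {h : ℝ → ℝ}
    (hh : ∀ (x : X) (r : ℝ), h r = ν.real (ball x r)) (A : Set X) (x y : X) {r : ℝ}
    (hr : 0 < r) :
    |ν.real (ball x r ∩ A) / h r - ν.real (ball y (r + 1) ∩ A) / h (r + 1)| ≤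
      2 * (h (r + (1 + dist x y)) / h r - 1) := by
  have hmono : Monotone h := fun s t hst => by
    simpa only [hh x] using hν.monotone_measureReal_ball x hst
  have hd := dist_nonneg (x := x) (y := y)
  have hba : ν.real (ball y (r + 1) ∩ A) ≤
      ν.real (ball x r ∩ A) + (h (r + (1 + dist x y)) - h r) := by
    rw [hh x, hh x r]
    exact measureReal_inter_le_add_sub A measurableSet_ball (ball_subset_ball (by linarith))
      (ball_subset_ball' (by rw [dist_comm]; linarith)) (hν.measure_ball_ne_top _ _)
  have hab : ν.real (ball x r ∩ A) ≤
      ν.real (ball y (r + 1) ∩ A) + (h (r + (1 + dist x y)) - h (r + 1)) := by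
    rw [hh y, hh y (r + 1)]
    exact measureReal_inter_le_add_sub A measurableSet_ball (ball_subset_ball (by linarith))
      (ball_subset_ball' (by linarith)) (hν.measure_ball_ne_top _ _)
  have hstep : h r ≤ h (r + 1) := hmono (by linarith)
  refine abs_div_sub_div_le (hh x r ▸ hν.measureReal_ball_pos x hr) hstep (hmono (by linarith))
    measureReal_nonneg ?_ (abs_sub_le_iff.2 ⟨by linarith, by linarith⟩)
  rw [hh y]
  exact measureReal_mono inter_subset_left (hν.measure_ball_ne_top _ _)

end IsUniformMeasure

theorem stmt16_general {X : Type*} [MetricSpace X] [MeasurableSpace X] [BorelSpace X]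
    (ν : Measure X) (hν : IsUniformMeasure ν) (hinf : ν Set.univ = ⊤)
    (h : ℝ → ℝ) (hh : ∀ (x : X) (r : ℝ), h r = (ν (Metric.ball x r)).toReal)
    (hlim : ∀ C : ℝ, 0 < C → Tendsto (fun r => h (r + C) / h r) atTop (𝓝 1))
    (A : Set X) (x y : X) :
    Tendsto (fun u =>
        (ν (Metric.ball x (rminus h u) ∩ A)).toReal / h (rminus h u) -
        (ν (Metric.ball y (rminus h u + 1) ∩ A)).toReal / h (rminus h u + 1))
      atTop (𝓝 0) := by
  have hr : Tendsto (rminus h) atTop atTop := tendsto_rminus_atTop <|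
    (hν.tendsto_measureReal_ball_atTop hinf x).congr fun r => (hh x r).symm
  have hbound : Tendsto (fun u => 2 * (h (rminus h u + (1 + dist x y)) / h (rminus h u) - 1))
      atTop (𝓝 0) := by
    simpa using (((hlim _ (by positivity)).comp hr).sub_const 1).const_mul 2
  refine squeeze_zero_norm' ?_ hbound
  filter_upwards [hr.eventually_gt_atTop 0] with u hu
  exact hν.abs_ratio_sub_ratio_le hh A x y hu

/-- Let `ν` be a uniform measure on a metric space `X` with `ν(X) = ∞`, let
`h(r)` be the common measure of open balls of radius `r`, and assume
`h(r+C)/h(r) → 1` as `r → ∞` for every `C > 0`. Then for any set `A` measurable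
for the completion `ν̄` of `ν` (on completion-measurable sets `ν̄` is given by
the outer measure of `ν`) and any `x, y ∈ X`,
`ν̄(B(x,r⁻(u)) ∩ A)/h(r⁻(u)) − ν̄(B(y,r⁺(u)) ∩ A)/h(r⁺(u)) → 0` as `u → ∞`,
where `r⁺(u) = r⁻(u) + 1`. -/
theorem stmt16 {X : Type*} [MetricSpace X] [MeasurableSpace X] [BorelSpace X]
    (ν : Measure X) (hν : IsUniformMeasure ν) (hinf : ν Set.univ = ⊤)
    (h : ℝ → ℝ) (hh : ∀ (x : X) (r : ℝ), h r = (ν (Metric.ball x r)).toReal)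
    (hlim : ∀ C : ℝ, 0 < C → Tendsto (fun r => h (r + C) / h r) atTop (𝓝 1))
    (A : Set X) (hA : NullMeasurableSet A ν) (x y : X) :
    Tendsto (fun u =>
        (ν (Metric.ball x (rminus h u) ∩ A)).toReal / h (rminus h u) -
        (ν (Metric.ball y (rminus h u + 1) ∩ A)).toReal / h (rminus h u + 1))
      atTop (𝓝 0) :=
  stmt16_general ν hν hinf h hh hlim A x y

end UPN
end
end
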